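/- For every n ≥ 1, every m > 0 and every x ∈ ℝ^n, there exists a unique p ∈ ℝ^n such that ∇W_m(p) = x, and for this p the supremum defining the conjugate is attained at p: W_m^*(x) = ⟨p, x⟩ − W_m(p). In particular, the gradient map ∇W_m : ℝ^n → ℝ^n is a bijection. -/

import Mathlib

/-!
Writing `a = m⁻¹`, the gradient is radial: `∇W_m(p) = c(‖p‖) • p` with
`c(r) = (r² + a²)^{-1/2} + 2a > 0`. So `∇W_m` maps each ray to itself and acts on norms by
`r ↦ r c(r)`, a continuous, strictly increasing bijection of `[0, ∞)`; hence `∇W_m` is bijective.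
Both summands of `W_m` lie above their tangent planes (for the square root this is Cauchy–Schwarz
for `(p, a)` and `(q, a)`), so when `x = ∇W_m(p)` the supremum defining `W_m^*(x)` is attained at `p`.
-/

noncomputable section

/-- The regularized energy density `W_m(p) = (‖p‖² + m⁻²)^{1/2} + m⁻¹‖p‖²`. -/
def Wfun (n : ℕ) (m : ℝ) (p : EuclideanSpace ℝ (Fin n)) : ℝ :=
  Real.sqrt (‖p‖ ^ 2 + m⁻¹ ^ 2) + m⁻¹ * ‖p‖ ^ 2

/-- The Legendre–Fenchel conjugate `W_m^*(x) = sup_p (⟨p,x⟩ - W_m(p))`. -/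
def Wstar (n : ℕ) (m : ℝ) (x : EuclideanSpace ℝ (Fin n)) : ℝ :=
  sSup (Set.range fun p => (inner ℝ p x : ℝ) - Wfun n m p)

open Real Set Function Filter
open scoped RealInnerProductSpace

section Gradient

variable {F : Type*} [NormedAddCommGroup F] [InnerProductSpace ℝ F] [CompleteSpace F]
  {f g : F → ℝ} {f' g' x : F}

theorem HasGradientAt.add (hf : HasGradientAt f f' x) (hg : HasGradientAt g g' x) :
    HasGradientAt (fun y => f y + g y) (f' + g') x := by
  rw [hasGradientAt_iff_hasFDerivAt, map_add]
  exact hf.hasFDerivAt.add hg.hasFDerivAt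

theorem HasGradientAt.const_mul (c : ℝ) (hf : HasGradientAt f f' x) :
    HasGradientAt (fun y => c * f y) (c • f') x := by
  rw [hasGradientAt_iff_hasFDerivAt, map_smul]
  exact hf.hasFDerivAt.const_mul c

theorem hasGradientAt_norm_sq (x : F) : HasGradientAt (fun y => ‖y‖ ^ 2) ((2 : ℝ) • x) x := by
  rw [hasGradientAt_iff_hasFDerivAt]
  refine (hasStrictFDerivAt_norm_sq x).hasFDerivAt.congr_fderiv ?_
  ext y
  simp

theorem hasGradientAt_sqrt_norm_sq_add_sq {a : ℝ} (ha : a ≠ 0) (x : F) :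
    HasGradientAt (fun y => √(‖y‖ ^ 2 + a ^ 2)) ((√(‖x‖ ^ 2 + a ^ 2))⁻¹ • x) x := by
  rw [hasGradientAt_iff_hasFDerivAt]
  refine (((hasGradientAt_norm_sq x).add (hasGradientAt_const x (a ^ 2))).hasFDerivAt.sqrt
    (by positivity)).congr_fderiv ?_
  ext y
  simp only [one_div, mul_inv_rev, add_zero, map_smul, smul_apply,
    InnerProductSpace.toDual_apply_apply, smul_eq_mul]
  field_simp

end Gradient

section Subgradient

variable {E : Type*} [NormedAddCommGroup E] [InnerProductSpace ℝ E]

theorem norm_sq_add_inner_le (x y : E) : ‖x‖ ^ 2 + ⟪(2 : ℝ) • x, y - x⟫ ≤ ‖y‖ ^ 2 := by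
  have h := norm_sub_sq_real y x
  rw [real_inner_smul_left, inner_sub_right, real_inner_self_eq_norm_sq, real_inner_comm]
  nlinarith [sq_nonneg ‖y - x‖]

-- Cauchy–Schwarz for the vectors `(x, a)` and `(y, a)` of `E × ℝ`.
theorem inner_add_sq_le_sqrt_mul_sqrt (a : ℝ) (x y : E) :
    ⟪x, y⟫ + a ^ 2 ≤ √(‖x‖ ^ 2 + a ^ 2) * √(‖y‖ ^ 2 + a ^ 2) := by
  rw [← sqrt_mul (by positivity)]
  refine (add_le_add_left (real_inner_le_norm x y) _).trans ((le_abs_self _).trans ?_)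
  exact abs_le_sqrt (by nlinarith [sq_nonneg (a * (‖x‖ - ‖y‖))])

theorem sqrt_norm_sq_add_sq_add_inner_le {a : ℝ} (ha : a ≠ 0) (x y : E) :
    √(‖x‖ ^ 2 + a ^ 2) + ⟪(√(‖x‖ ^ 2 + a ^ 2))⁻¹ • x, y - x⟫ ≤ √(‖y‖ ^ 2 + a ^ 2) := by
  have hpos : 0 < √(‖x‖ ^ 2 + a ^ 2) := sqrt_pos.2 (by positivity)
  have hsq : √(‖x‖ ^ 2 + a ^ 2) ^ 2 = ‖x‖ ^ 2 + a ^ 2 := sq_sqrt (by positivity)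
  have hcs := inner_add_sq_le_sqrt_mul_sqrt a x y
  rw [real_inner_smul_left, inner_sub_right, real_inner_self_eq_norm_sq, ← le_sub_iff_add_le',
    inv_mul_le_iff₀ hpos]
  nlinarith

theorem csSup_range_inner_sub_eq {f : E → ℝ} {x y : E} (h : ∀ z, f x + ⟪y, z - x⟫ ≤ f z) :
    sSup (range fun z => ⟪z, y⟫ - f z) = ⟪x, y⟫ - f x := by
  refine IsGreatest.csSup_eq ⟨⟨x, rfl⟩, ?_⟩
  rintro _ ⟨z, rfl⟩
  have := h z
  rw [inner_sub_right, real_inner_comm z, real_inner_comm x] at this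
  change ⟪z, y⟫ - f z ≤ _
  linarith

end Subgradient

section Radial

theorem monotoneOn_div_sqrt_sq_add_sq {a : ℝ} (ha : a ≠ 0) :
    MonotoneOn (fun r => r / √(r ^ 2 + a ^ 2)) (Ici 0) := by
  intro r (hr : 0 ≤ r) s (hs : 0 ≤ s) hrs
  rw [div_le_div_iff₀ (sqrt_pos.2 (by positivity)) (sqrt_pos.2 (by positivity))]
  calc r * √(s ^ 2 + a ^ 2) = √(r ^ 2 * (s ^ 2 + a ^ 2)) := by
        rw [sqrt_mul (sq_nonneg r), sqrt_sq hr]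
    _ ≤ √(s ^ 2 * (r ^ 2 + a ^ 2)) := sqrt_le_sqrt (by nlinarith [mul_le_mul hrs hrs hr hs])
    _ = s * √(r ^ 2 + a ^ 2) := by rw [sqrt_mul (sq_nonneg s), sqrt_sq hs]

def radialCoeff (a r : ℝ) : ℝ := (√(r ^ 2 + a ^ 2))⁻¹ + 2 * a

variable {a : ℝ}

theorem radialCoeff_pos (ha : 0 < a) (r : ℝ) : 0 < radialCoeff a r := by
  unfold radialCoeff
  positivity

theorem mul_radialCoeff (a r : ℝ) : r * radialCoeff a r = r / √(r ^ 2 + a ^ 2) + 2 * a * r := by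
  rw [radialCoeff, mul_add, div_eq_mul_inv]
  ring

theorem strictMonoOn_mul_radialCoeff (ha : 0 < a) :
    StrictMonoOn (fun r => r * radialCoeff a r) (Ici 0) := by
  intro r hr s hs hrs
  simp only [mul_radialCoeff]
  have := monotoneOn_div_sqrt_sq_add_sq ha.ne' hr hs hrs.le
  nlinarith

theorem surjOn_mul_radialCoeff (ha : 0 < a) :
    SurjOn (fun r => r * radialCoeff a r) (Ici 0) (Ici 0) := by
  have hcont : Continuous fun r => r * radialCoeff a r := by
    unfold radialCoeff
    fun_prop (disch := exact fun r => (sqrt_pos.2 (by positivity)).ne')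
  have htop : Tendsto (fun r => r * radialCoeff a r) atTop atTop := by
    refine tendsto_atTop_mono' _ ?_ (tendsto_id.const_mul_atTop (by positivity : 0 < 2 * a))
    filter_upwards [eventually_ge_atTop 0] with r hr
    rw [mul_radialCoeff]
    have : 0 ≤ r / √(r ^ 2 + a ^ 2) := by positivity
    simp only [id]
    linarith
  intro y hy
  simpa using intermediate_value_Ici hcont.continuousOn htop (by simpa using hy)

theorem bijective_smul_norm_self {E : Type*} [NormedAddCommGroup E] [NormedSpace ℝ E]
    {c : ℝ → ℝ} (hc : ∀ r, 0 ≤ r → 0 < c r) (hinj : InjOn (fun r => r * c r) (Ici 0))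
    (hsurj : SurjOn (fun r => r * c r) (Ici 0) (Ici 0)) :
    Bijective fun v : E => c ‖v‖ • v := by
  have hnorm (v : E) : ‖c ‖v‖ • v‖ = ‖v‖ * c ‖v‖ := by
    rw [norm_smul, norm_of_nonneg (hc _ (norm_nonneg v)).le, mul_comm]
  refine ⟨fun v w hvw => ?_, fun x => ?_⟩
  · have h : ‖v‖ = ‖w‖ := hinj (norm_nonneg v) (norm_nonneg w)
      (by simpa only [hnorm] using congrArg norm hvw)
    simp only [h] at hvw
    exact smul_right_injective E (hc _ (norm_nonneg w)).ne' hvw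
  · rcases eq_or_ne x 0 with rfl | hx
    · exact ⟨0, smul_zero _⟩
    obtain ⟨r, hr, hrx⟩ := hsurj (norm_nonneg x)
    have hx' : ‖x‖ ≠ 0 := norm_ne_zero_iff.2 hx
    have hr' : ‖(r / ‖x‖) • x‖ = r := by
      rw [norm_smul, norm_div, norm_norm, norm_of_nonneg hr, div_mul_cancel₀ _ hx']
    refine ⟨(r / ‖x‖) • x, ?_⟩
    simp only [hr', smul_smul]
    rw [← mul_div_assoc, mul_comm, show r * c r = ‖x‖ from hrx, div_self hx', one_smul]

end Radial

section Wfun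

variable {n : ℕ} {m : ℝ}

theorem hasGradientAt_Wfun (hm : m ≠ 0) (p : EuclideanSpace ℝ (Fin n)) :
    HasGradientAt (Wfun n m) (radialCoeff m⁻¹ ‖p‖ • p) p := by
  rw [radialCoeff, add_smul, mul_comm 2, mul_smul]
  exact (hasGradientAt_sqrt_norm_sq_add_sq (inv_ne_zero hm) p).add
    ((hasGradientAt_norm_sq p).const_mul m⁻¹)

theorem Wfun_add_inner_le (hm : 0 < m) (p q : EuclideanSpace ℝ (Fin n)) :
    Wfun n m p + ⟪radialCoeff m⁻¹ ‖p‖ • p, q - p⟫ ≤ Wfun n m q := by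
  have hsqrt := sqrt_norm_sq_add_sq_add_inner_le (inv_ne_zero hm.ne') p q
  have hsq := mul_le_mul_of_nonneg_left (norm_sq_add_inner_le p q) (inv_nonneg.2 hm.le)
  rw [radialCoeff, add_smul, inner_add_left, mul_comm 2, mul_smul]
  simp only [real_inner_smul_left] at hsqrt hsq ⊢
  unfold Wfun
  linarith

end Wfun

theorem Wfun_gradient_bijective_general (n : ℕ) (m : ℝ) (hm : 0 < m) :
    (∀ x : EuclideanSpace ℝ (Fin n), ∃! p : EuclideanSpace ℝ (Fin n),
      gradient (Wfun n m) p = x) ∧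
    (∀ x p : EuclideanSpace ℝ (Fin n), gradient (Wfun n m) p = x →
      Wstar n m x = (inner ℝ p x : ℝ) - Wfun n m p) ∧
    Function.Bijective (gradient (Wfun n m)) := by
  have hgrad : gradient (Wfun n m) = fun p => radialCoeff m⁻¹ ‖p‖ • p :=
    gradient_eq (hasGradientAt_Wfun hm.ne')
  have hm' : 0 < m⁻¹ := inv_pos.2 hm
  have hbij : Bijective (gradient (Wfun n m)) := hgrad ▸ bijective_smul_norm_self
    (fun r _ => radialCoeff_pos hm' r) (strictMonoOn_mul_radialCoeff hm').injOn
    (surjOn_mul_radialCoeff hm')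
  refine ⟨hbij.existsUnique, fun x p hp => ?_, hbij⟩
  rw [hgrad] at hp
  subst hp
  exact csSup_range_inner_sub_eq (Wfun_add_inner_le hm p)

/-- For every `x` there is a unique `p` with `∇W_m(p) = x`, at which the supremum defining
`W_m^*(x)` is attained; in particular `∇W_m` is a bijection. -/
theorem Wfun_gradient_bijective (n : ℕ) (hn : 1 ≤ n) (m : ℝ) (hm : 0 < m) :
    (∀ x : EuclideanSpace ℝ (Fin n), ∃! p : EuclideanSpace ℝ (Fin n),
      gradient (Wfun n m) p = x) ∧
    (∀ x p : EuclideanSpace ℝ (Fin n), gradient (Wfun n m) p = x →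
      Wstar n m x = (inner ℝ p x : ℝ) - Wfun n m p) ∧
    Function.Bijective (gradient (Wfun n m)) :=
  Wfun_gradient_bijective_general n m hm
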